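/- For every μ > 0, ω > 0, and x₀, v ∈ ℝ, the function u(x,t) = e^{i(v/2)x} e^{-i(v²/4)t} e^{iωt} ω^{1/(2μ)} (μ+1)^{1/(2μ)} sech^{1/μ}(μ√ω (x - x₀ - v t)) is a solution of the focusing nonlinear Schrödinger equation i ∂u/∂t = -∂²u/∂x² - |u|^{2μ} u for all x ∈ ℝ and t ∈ ℝ. -/

import Mathlib

/-!
The soliton is the Galilean boost `e^{i(v/2)x - i(v²/4)t + iωt} φ(x - x₀ - vt)` of the profile
`φ(y) = A sech^p(cy)`, and the boost turns `i ∂ₜu + ∂ₓ²u` into the boost of `φ'' - ωφ`, for any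
profile `φ` and any gauge-invariant nonlinearity. So it suffices that
`φ'' = ωφ - φ^{2μ+1}`. From `tanh' = sech²` and `tanh² = 1 - sech²` one gets
`(sech^p)'' = p² sech^p - p(p+1) sech^{p+2}`; the choices `p = 1/μ`, `c = μ√ω` and
`A^{2μ} = ω(μ+1)` match the two coefficients.
-/

open Real MeasureTheory

/-- `sech y = 1 / cosh y`. -/
noncomputable def sech (y : ℝ) : ℝ := 1 / Real.cosh y

/-- The travelling soliton of the focusing NLS with power nonlinearity of exponent `μ`:
`u(x,t) = e^{i(v/2)x} e^{-i(v²/4)t} e^{iωt} ω^{1/(2μ)} (μ+1)^{1/(2μ)}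
          sech^{1/μ}(μ√ω (x - x₀ - v t))`. -/
noncomputable def solitonWave (μ ω x₀ v : ℝ) (x t : ℝ) : ℂ :=
  Complex.exp (Complex.I * (v / 2) * x) *
  Complex.exp (-Complex.I * (v ^ 2 / 4) * t) *
  Complex.exp (Complex.I * ω * t) *
  ((ω ^ (1 / (2 * μ)) : ℝ) : ℂ) * (((μ + 1) ^ (1 / (2 * μ)) : ℝ) : ℂ) *
  ((sech (μ * Real.sqrt ω * (x - x₀ - v * t)) ^ (1 / μ) : ℝ) : ℂ)

lemma sech_pos (y : ℝ) : 0 < sech y := by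
  unfold sech; positivity

lemma tanh_sq_eq_one_sub_sech_sq (y : ℝ) : Real.tanh y ^ 2 = 1 - sech y ^ 2 := by
  have hc := (Real.cosh_pos y).ne'
  rw [Real.tanh_eq_sinh_div_cosh, sech]
  field_simp
  linarith [Real.cosh_sq_sub_sinh_sq y]

lemma hasDerivAt_sech (y : ℝ) : HasDerivAt sech (-(Real.tanh y * sech y)) y := by
  have hc := (Real.cosh_pos y).ne'
  have h := (Real.hasDerivAt_cosh y).inv hc
  rw [show sech = fun z => (Real.cosh z)⁻¹ from funext fun z => one_div _]
  refine h.congr_deriv ?_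
  rw [Real.tanh_eq_sinh_div_cosh]
  field_simp

lemma hasDerivAt_tanh (y : ℝ) : HasDerivAt Real.tanh (sech y ^ 2) y := by
  have hc := (Real.cosh_pos y).ne'
  have h := (Real.hasDerivAt_sinh y).div (Real.hasDerivAt_cosh y) hc
  rw [show Real.tanh = fun z => Real.sinh z / Real.cosh z from
    funext Real.tanh_eq_sinh_div_cosh]
  refine h.congr_deriv ?_
  rw [sech]
  field_simp
  linarith [Real.cosh_sq_sub_sinh_sq y]

lemma hasDerivAt_sech_rpow (p y : ℝ) :
    HasDerivAt (fun z => sech z ^ p) (-(p * Real.tanh y * sech y ^ p)) y := by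
  refine ((hasDerivAt_sech y).rpow_const (p := p) (Or.inl (sech_pos y).ne')).congr_deriv ?_
  rw [Real.rpow_sub_one (sech_pos y).ne']
  field_simp [(sech_pos y).ne']

lemma hasDerivAt_tanh_mul_sech_rpow (p y : ℝ) :
    HasDerivAt (fun z => Real.tanh z * sech z ^ p)
      (((p + 1) * sech y ^ 2 - p) * sech y ^ p) y := by
  refine ((hasDerivAt_tanh y).mul (hasDerivAt_sech_rpow p y)).congr_deriv ?_
  linear_combination (-p * sech y ^ p) * tanh_sq_eq_one_sub_sech_sq y

lemma hasDerivAt_cexp_mul_ofReal (a : ℂ) (s : ℝ) :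
    HasDerivAt (fun s : ℝ => Complex.exp (a * s)) (a * Complex.exp (a * s)) s := by
  have h := ((hasDerivAt_id (s : ℂ)).const_mul a).cexp.comp_ofReal
  simpa [mul_comm] using h

noncomputable def travellingWave (ω v x₀ : ℝ) (φ : ℝ → ℂ) (x t : ℝ) : ℂ :=
  Complex.exp (Complex.I * (v / 2) * x) * Complex.exp (-Complex.I * (v ^ 2 / 4) * t) *
    Complex.exp (Complex.I * ω * t) * φ (x - x₀ - v * t)

section TravellingWave

variable (ω v x₀ : ℝ) {φ φ' φ'' : ℝ → ℂ}

lemma hasDerivAt_travellingWave_space (hφ : ∀ y, HasDerivAt φ (φ' y) y) (x t : ℝ) :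
    HasDerivAt (fun y => travellingWave ω v x₀ φ y t)
      (travellingWave ω v x₀ (fun y => Complex.I * (v / 2) * φ y + φ' y) x t) x := by
  have hξ : HasDerivAt (fun y : ℝ => y - x₀ - v * t) 1 x :=
    ((hasDerivAt_id x).sub_const x₀).sub_const (v * t)
  have h := (((hasDerivAt_cexp_mul_ofReal (Complex.I * (v / 2)) x).mul_const
    (Complex.exp (-Complex.I * (v ^ 2 / 4) * t))).mul_const
    (Complex.exp (Complex.I * ω * t))).mul ((hφ (x - x₀ - v * t)).scomp x hξ)
  refine h.congr_deriv ?_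
  simp only [travellingWave, Function.comp_apply, one_smul]
  ring

lemma hasDerivAt_travellingWave_time (hφ : ∀ y, HasDerivAt φ (φ' y) y) (x t : ℝ) :
    HasDerivAt (fun s => travellingWave ω v x₀ φ x s)
      (travellingWave ω v x₀
        (fun y => Complex.I * (ω - v ^ 2 / 4) * φ y - v * φ' y) x t) t := by
  have hξ : HasDerivAt (fun s : ℝ => x - x₀ - v * s) (-v) t := by
    simpa using ((hasDerivAt_id t).const_mul v).const_sub (x - x₀)
  have h := (((hasDerivAt_cexp_mul_ofReal (-Complex.I * (v ^ 2 / 4)) t).const_mul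
    (Complex.exp (Complex.I * (v / 2) * x))).mul
    (hasDerivAt_cexp_mul_ofReal (Complex.I * ω) t)).mul ((hφ (x - x₀ - v * t)).scomp t hξ)
  refine h.congr_deriv ?_
  simp only [travellingWave, Pi.mul_apply, Function.comp_apply, Complex.real_smul]
  push_cast
  ring

lemma norm_travellingWave (φ : ℝ → ℂ) (x t : ℝ) :
    ‖travellingWave ω v x₀ φ x t‖ = ‖φ (x - x₀ - v * t)‖ := by
  simp [travellingWave, Complex.norm_exp, ← Complex.ofReal_pow]

theorem travellingWave_solves_NLS (g : ℝ → ℝ) (hφ : ∀ y, HasDerivAt φ (φ' y) y)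
    (hφ' : ∀ y, HasDerivAt φ' (φ'' y) y) (hode : ∀ y, φ'' y = ω * φ y - (g ‖φ y‖ : ℂ) * φ y) :
    ∀ x t : ℝ,
      Complex.I * deriv (fun s => travellingWave ω v x₀ φ x s) t =
        - deriv (deriv (fun y => travellingWave ω v x₀ φ y t)) x
        - (g ‖travellingWave ω v x₀ φ x t‖ : ℂ) * travellingWave ω v x₀ φ x t := by
  intro x t
  have hψ : ∀ y, HasDerivAt (fun y => Complex.I * (v / 2) * φ y + φ' y)
      (Complex.I * (v / 2) * φ' y + φ'' y) y :=
    fun y => ((hφ y).const_mul _).add (hφ' y)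
  rw [(hasDerivAt_travellingWave_time ω v x₀ hφ x t).deriv,
    funext fun y => (hasDerivAt_travellingWave_space ω v x₀ hφ y t).deriv,
    (hasDerivAt_travellingWave_space ω v x₀ hψ x t).deriv, norm_travellingWave]
  simp only [travellingWave, hode]
  linear_combination (Complex.exp (Complex.I * (v / 2) * x) *
    Complex.exp (-Complex.I * (v ^ 2 / 4) * t) * Complex.exp (Complex.I * ω * t) *
    ω * φ (x - x₀ - v * t)) * Complex.I_sq

end TravellingWave

section SechPower

variable (A c p : ℝ)

lemma hasDerivAt_const_mul_sech_rpow (y : ℝ) :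
    HasDerivAt (fun z => A * sech (c * z) ^ p)
      (-(A * c * p) * (Real.tanh (c * y) * sech (c * y) ^ p)) y := by
  have h := ((hasDerivAt_sech_rpow p (c * y)).comp y ((hasDerivAt_id y).const_mul c)).const_mul A
  refine h.congr_deriv ?_
  ring

lemma hasDerivAt_const_mul_tanh_mul_sech_rpow (B : ℝ) (y : ℝ) :
    HasDerivAt (fun z => B * (Real.tanh (c * z) * sech (c * z) ^ p))
      (B * c * (((p + 1) * sech (c * y) ^ 2 - p) * sech (c * y) ^ p)) y := by
  have h := ((hasDerivAt_tanh_mul_sech_rpow p (c * y)).comp y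
    ((hasDerivAt_id y).const_mul c)).const_mul B
  refine h.congr_deriv ?_
  ring

end SechPower

lemma soliton_amplitude_rpow {μ ω : ℝ} (hμ : 0 < μ) (hω : 0 ≤ ω) {s : ℝ} (hs : 0 ≤ s) :
    (ω ^ (1 / (2 * μ)) * (μ + 1) ^ (1 / (2 * μ)) * s ^ (1 / μ)) ^ (2 * μ)
      = ω * (μ + 1) * s ^ 2 := by
  have hμ1 : (0 : ℝ) ≤ μ + 1 := by linarith
  rw [Real.mul_rpow (by positivity) (by positivity), Real.mul_rpow (by positivity) (by positivity),
    ← Real.rpow_mul hω, ← Real.rpow_mul hμ1, ← Real.rpow_mul hs,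
    one_div_mul_cancel (by positivity), one_div_mul_eq_div, mul_div_cancel_right₀ _ hμ.ne',
    Real.rpow_one, Real.rpow_one, Real.rpow_two]

lemma solitonWave_eq_travellingWave (μ ω x₀ v : ℝ) :
    solitonWave μ ω x₀ v = travellingWave ω v x₀ (fun y =>
      ((ω ^ (1 / (2 * μ)) * (μ + 1) ^ (1 / (2 * μ)) * sech (μ * √ω * y) ^ (1 / μ) : ℝ) : ℂ)) := by
  funext x t
  simp only [solitonWave, travellingWave]
  push_cast
  ring

theorem soliton_solves_NLS (μ ω x₀ v : ℝ) (hμ : 0 < μ) (hω : 0 < ω) :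
    ∀ x t : ℝ,
      Complex.I * deriv (fun s : ℝ => solitonWave μ ω x₀ v x s) t =
        - deriv (deriv (fun y : ℝ => solitonWave μ ω x₀ v y t)) x
        - ((‖solitonWave μ ω x₀ v x t‖ ^ (2 * μ) : ℝ) : ℂ) *
            solitonWave μ ω x₀ v x t := by
  rw [solitonWave_eq_travellingWave]
  set A := ω ^ (1 / (2 * μ)) * (μ + 1) ^ (1 / (2 * μ))
  set c := μ * √ω
  set p := 1 / μ
  refine travellingWave_solves_NLS ω v x₀ (· ^ (2 * μ))
    (fun y => (hasDerivAt_const_mul_sech_rpow A c p y).ofReal_comp)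
    (fun y => (hasDerivAt_const_mul_tanh_mul_sech_rpow c p _ y).ofReal_comp) fun y => ?_
  have hs := (sech_pos (c * y)).le
  have hnorm : ‖((A * sech (c * y) ^ p : ℝ) : ℂ)‖ ^ (2 * μ) = ω * (μ + 1) * sech (c * y) ^ 2 := by
    rw [Complex.norm_real, Real.norm_of_nonneg (mul_nonneg (by positivity) (by positivity))]
    exact soliton_amplitude_rpow hμ hω.le hs
  have hω_eq : c ^ 2 * p ^ 2 = ω := by
    simp only [c, p]
    field_simp
    rw [Real.sq_sqrt hω.le]
  have hωμ_eq : c ^ 2 * p * (p + 1) = ω * (μ + 1) := by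
    simp only [c, p]
    field_simp
    rw [Real.sq_sqrt hω.le]
    ring
  clear_value A c p
  have hode : -(A * c * p) * c * (((p + 1) * sech (c * y) ^ 2 - p) * sech (c * y) ^ p) =
      ω * (A * sech (c * y) ^ p) - ω * (μ + 1) * sech (c * y) ^ 2 * (A * sech (c * y) ^ p) := by
    linear_combination (A * sech (c * y) ^ p) * hω_eq
      - (A * sech (c * y) ^ 2 * sech (c * y) ^ p) * hωμ_eq
  rw [hnorm]
  exact_mod_cast hode
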